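/- Let φ(θ) = -m cos(θ - θ₀) with m ≥ 0 and θ₀ ∈ T, and let f ∈ L¹(T × ℝ) be nonnegative. Then ∬ (v²/2 + φ(θ)) f^{*φ}(θ,v) dθ dv = ∫₀^∞ f^♯(s) a_φ⁻¹(s) ds. -/

import Mathlib

open MeasureTheory Real Set
open scoped ENNReal

/-- Distribution function μ_f(t) = |{(θ,v) ∈ T × ℝ : f(θ,v) > t}|, T = [0,2π). -/
noncomputable def distrib (f : ℝ × ℝ → ℝ) (t : ℝ) : ℝ≥0∞ :=
  volume {p : ℝ × ℝ | p.1 ∈ Set.Ico (0:ℝ) (2 * π) ∧ t < f p}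

/-- Pseudo-inverse f^♯(s) = inf{t ≥ 0 : μ_f(t) ≤ s}. -/
noncomputable def pseudoInv (f : ℝ × ℝ → ℝ) (s : ℝ≥0∞) : ℝ :=
  sInf {t : ℝ | 0 ≤ t ∧ distrib f t ≤ s}

/-- Phase-space volume a_φ(e) = |{(θ,v) ∈ T × ℝ : v²/2 + φ(θ) < e}|. -/
noncomputable def aVol (φ : ℝ → ℝ) (e : ℝ) : ℝ≥0∞ :=
  volume {p : ℝ × ℝ | p.1 ∈ Set.Ico (0:ℝ) (2 * π) ∧ p.2 ^ 2 / 2 + φ p.1 < e}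

/-!
Write `E(θ, v) = v²/2 + φ(θ)` and `S = a_φ ∘ E`. Since `a_φ` is strictly increasing above `min φ`
and the level sets of `E` are null, `{S ≤ s} = {E ≤ a_φ⁻¹(s)}` has measure `a_φ(a_φ⁻¹(s)) = s`:
`S` pushes Lebesgue measure on `T × ℝ` forward to Lebesgue measure on `(0, ∞)`. Strict monotonicity
also gives `E = a_φ⁻¹ ∘ S`, so the integrand `E · f^♯(S)` is a function of `S`, and the identity
is the change of variables `s = S(θ, v)`.
-/

theorem measure_Ioc_eq_ofReal_sub {ν : Measure ℝ} (h : ∀ t, ν (Iic t) = ENNReal.ofReal t)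
    {a b : ℝ} (hab : a ≤ b) : ν (Ioc a b) = ENNReal.ofReal b - ENNReal.ofReal a := by
  rw [← Iic_sdiff_Iic, measure_sdiff (Iic_subset_Iic.2 hab) measurableSet_Iic.nullMeasurableSet
    (by simp [h]), h, h]

theorem eq_volume_restrict_Ioi_of_measure_Iic {ν : Measure ℝ}
    (h : ∀ t, ν (Iic t) = ENNReal.ofReal t) : ν = volume.restrict (Ioi 0) := by
  have hvol : ∀ t, volume.restrict (Ioi (0 : ℝ)) (Iic t) = ENNReal.ofReal t := fun t => by
    rw [Measure.restrict_apply measurableSet_Iic, Iic_inter_Ioi, Real.volume_Ioc, sub_zero]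
  refine (Measure.ext_of_Ioc _ _ fun a b hab => ?_).symm
  rw [measure_Ioc_eq_ofReal_sub hvol hab.le, measure_Ioc_eq_ofReal_sub h hab.le]

theorem measurable_pseudoInv (f : ℝ × ℝ → ℝ) : Measurable (pseudoInv f) := by
  set S : ℝ≥0∞ → Set ℝ := fun s => {t | 0 ≤ t ∧ distrib f t ≤ s}
  have hS : Monotone S := fun _ _ hs _ ht => ⟨ht.1, ht.2.trans hs⟩
  refine measurable_of_Ioi fun c => OrdConnected.measurableSet ⟨fun a ha b hb x hx => ?_⟩
  by_cases hne : (S x).Nonempty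
  · exact lt_of_lt_of_le hb (csInf_le_csInf ⟨0, fun t ht => ht.1⟩ hne (hS hx.2))
  · -- `sInf ∅ = 0`
    have hSx : S x = ∅ := not_nonempty_iff_eq_empty.1 hne
    have hSa : S a = ∅ := subset_empty_iff.1 (hSx ▸ hS hx.1)
    have ha0 : sInf (S a) = 0 := by rw [hSa, Real.sInf_empty]
    show c < sInf (S x)
    rw [hSx, Real.sInf_empty, ← ha0]
    exact ha

section SublevelMeasure

variable {X : Type*} [MeasurableSpace X] {μ : Measure X} {E : X → ℝ} {c : ℝ} {aInv : ℝ → ℝ}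

theorem measure_lt_lt_top_of_strictMonoOn (hA : StrictMonoOn (fun e => μ {x | E x < e}) (Ici c))
    {e : ℝ} (he : c ≤ e) : μ {x | E x < e} < ∞ :=
  (hA he (by simp only [mem_Ici]; linarith) (lt_add_one e)).trans_le le_top

theorem energy_le_aInv_iff (hc : ∀ x, c ≤ E x)
    (hA : StrictMonoOn (fun e => μ {x | E x < e}) (Ici c))
    (haInv : ∀ s ≥ 0, c ≤ aInv s ∧ μ {x | E x < aInv s} = ENNReal.ofReal s)
    (x : X) {t : ℝ} (ht : 0 ≤ t) :
    (μ {y | E y < E x}).toReal ≤ t ↔ E x ≤ aInv t := by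
  rw [← ENNReal.le_ofReal_iff_toReal_le (measure_lt_lt_top_of_strictMonoOn hA (hc x)).ne ht,
    ← (haInv t ht).2]
  exact hA.le_iff_le (hc x) (haInv t ht).1

theorem energy_eq_aInv (hc : ∀ x, c ≤ E x)
    (hA : StrictMonoOn (fun e => μ {x | E x < e}) (Ici c))
    (haInv : ∀ s ≥ 0, c ≤ aInv s ∧ μ {x | E x < aInv s} = ENNReal.ofReal s) (x : X) :
    E x = aInv (μ {y | E y < E x}).toReal := by
  obtain ⟨hcs, hs⟩ := haInv _ ENNReal.toReal_nonneg
  refine hA.injOn (hc x) hcs ?_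
  simp only [hs, ENNReal.ofReal_toReal (measure_lt_lt_top_of_strictMonoOn hA (hc x)).ne]

theorem monotoneOn_aInv (hA : StrictMonoOn (fun e => μ {x | E x < e}) (Ici c))
    (haInv : ∀ s ≥ 0, c ≤ aInv s ∧ μ {x | E x < aInv s} = ENNReal.ofReal s) :
    MonotoneOn aInv (Ici 0) := fun s hs s' hs' hss' => by
  rw [← hA.le_iff_le (haInv s hs).1 (haInv s' hs').1]
  simp only [(haInv s hs).2, (haInv s' hs').2]
  exact ENNReal.ofReal_le_ofReal hss'

theorem measurable_toReal_measure_lt (hE : Measurable E) :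
    Measurable fun x => (μ {y | E y < E x}).toReal := by
  have hmono : Monotone fun e => μ {y | E y < e} :=
    fun _ _ he => measure_mono fun _ hy => lt_of_lt_of_le hy he
  exact ENNReal.measurable_toReal.comp (hmono.measurable.comp hE)

theorem map_toReal_measure_lt (hE : Measurable E) (hlevel : ∀ e, μ {x | E x = e} = 0)
    (hc : ∀ x, c ≤ E x) (hA : StrictMonoOn (fun e => μ {x | E x < e}) (Ici c))
    (haInv : ∀ s ≥ 0, c ≤ aInv s ∧ μ {x | E x < aInv s} = ENNReal.ofReal s) :
    μ.map (fun x => (μ {y | E y < E x}).toReal) = volume.restrict (Ioi 0) := by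
  refine eq_volume_restrict_Ioi_of_measure_Iic fun t => ?_
  rw [Measure.map_apply (measurable_toReal_measure_lt hE) measurableSet_Iic]
  rcases lt_or_ge t 0 with ht | ht
  · rw [ENNReal.ofReal_of_nonpos ht.le, ← measure_empty (μ := μ)]
    congr 1
    exact eq_empty_of_forall_notMem fun x hx => (ENNReal.toReal_nonneg.trans hx).not_gt ht
  · have hset : (fun x => (μ {y | E y < E x}).toReal) ⁻¹' Iic t =
        {x | E x < aInv t} ∪ {x | E x = aInv t} := by
      ext x
      simp only [mem_preimage, mem_Iic, energy_le_aInv_iff hc hA haInv x ht, mem_union,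
        mem_ofPred_eq, le_iff_lt_or_eq]
    rw [hset, ← (haInv t ht).2]
    exact le_antisymm ((measure_union_le _ _).trans (by rw [hlevel, add_zero]))
      (measure_mono subset_union_left)

theorem integral_comp_energy_eq_setIntegral_Ioi (hE : Measurable E)
    (hlevel : ∀ e, μ {x | E x = e} = 0) (hc : ∀ x, c ≤ E x)
    (hA : StrictMonoOn (fun e => μ {x | E x < e}) (Ici c))
    (haInv : ∀ s ≥ 0, c ≤ aInv s ∧ μ {x | E x < aInv s} = ENNReal.ofReal s)
    {g : ℝ → ℝ} (hg : Measurable g) :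
    ∫ x, g (E x) ∂μ = ∫ s in Ioi 0, g (aInv s) := by
  have hmap := map_toReal_measure_lt hE hlevel hc hA haInv
  have hgm : AEStronglyMeasurable (g ∘ aInv) (volume.restrict (Ioi 0)) :=
    (hg.comp_aemeasurable (aemeasurable_restrict_of_monotoneOn measurableSet_Ioi
      ((monotoneOn_aInv hA haInv).mono Ioi_subset_Ici_self))).aestronglyMeasurable
  calc ∫ x, g (E x) ∂μ = ∫ x, (g ∘ aInv) (μ {y | E y < E x}).toReal ∂μ := by
        simp only [Function.comp_apply, ← energy_eq_aInv hc hA haInv]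
    _ = ∫ s in Ioi 0, g (aInv s) := by
        rw [← integral_map (measurable_toReal_measure_lt hE).aemeasurable (hmap ▸ hgm), hmap]
        rfl

end SublevelMeasure

section PhaseSpace

variable {φ : ℝ → ℝ} {c : ℝ}

def phaseStrip : Set (ℝ × ℝ) := {p | p.1 ∈ Ico 0 (2 * π)}

noncomputable def energy (φ : ℝ → ℝ) (p : ℝ × ℝ) : ℝ := p.2 ^ 2 / 2 + φ p.1

theorem measurable_energy (hφ : Measurable φ) : Measurable (energy φ) :=
  ((measurable_snd.pow_const 2).div_const 2).add (hφ.comp measurable_fst)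

theorem aVol_eq_restrict_phaseStrip (hφ : Measurable φ) (e : ℝ) :
    aVol φ e = volume.restrict phaseStrip {p | energy φ p < e} := by
  have hmeas : MeasurableSet {p | energy φ p < e} := measurable_energy hφ measurableSet_Iio
  rw [Measure.restrict_apply hmeas, aVol, inter_comm]
  rfl

theorem aVol_mono (φ : ℝ → ℝ) : Monotone (aVol φ) :=
  fun _ _ he => measure_mono fun _ hp => ⟨hp.1, hp.2.trans_le he⟩

theorem volume_energy_eq (hφ : Measurable φ) (e : ℝ) : volume {p | energy φ p = e} = 0 := by
  have hmeas : MeasurableSet {p | energy φ p = e} :=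
    measurable_energy hφ (measurableSet_singleton e)
  rw [Measure.volume_eq_prod, Measure.measure_prod_null hmeas]
  refine Filter.Eventually.of_forall fun θ => measure_mono_null (fun v hv => ?_)
    (((countable_singleton (-√(2 * (e - φ θ)))).insert √(2 * (e - φ θ))).measure_zero volume)
  have hv2 : v ^ 2 = 2 * (e - φ θ) := by
    simp only [mem_preimage, mem_ofPred_eq, energy] at hv; linarith
  exact (abs_eq (sqrt_nonneg _)).1 (hv2 ▸ sqrt_sq_eq_abs v).symm

theorem aVol_lt_top (hφ : ∀ θ, c ≤ φ θ) (e : ℝ) : aVol φ e < ∞ := by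
  refine Bornology.IsBounded.measure_lt_top (((Metric.isBounded_Icc 0 (2 * π)).prod
    (Metric.isBounded_Icc (-√(2 * (e - c))) √(2 * (e - c)))).subset fun p hp => ?_)
  have hv : |p.2| ≤ √(2 * (e - c)) := abs_le_sqrt (by linarith [hp.2, hφ p.1])
  exact ⟨Ico_subset_Icc_self hp.1, abs_le.1 hv⟩

theorem Continuous.exists_mem_Ioo_lt_of_mem_Ico (hφ : Continuous φ) {a b θ₁ : ℝ}
    (hθ₁ : θ₁ ∈ Ico a b) {y : ℝ} (hy : φ θ₁ < y) : ∃ θ ∈ Ioo a b, φ θ < y := by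
  have hlt : ∀ᶠ θ in nhdsWithin θ₁ (Ioi θ₁), φ θ < y :=
    ((hφ.tendsto θ₁).eventually (gt_mem_nhds hy)).filter_mono nhdsWithin_le_nhds
  obtain ⟨θ, hθ, hθI⟩ := (hlt.and (Ioo_mem_nhdsGT hθ₁.2)).exists
  exact ⟨θ, ⟨hθ₁.1.trans_lt hθI.1, hθI.2⟩, hθ⟩

theorem continuous_energy (hφ : Continuous φ) : Continuous (energy φ) := by
  unfold energy; fun_prop

theorem strictMonoOn_aVol (hφ : Continuous φ) (hc : ∀ θ, c ≤ φ θ) {θ₁ : ℝ}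
    (hθ₁ : θ₁ ∈ Ico 0 (2 * π)) (hφθ₁ : φ θ₁ = c) : StrictMonoOn (aVol φ) (Ici c) := by
  intro x hx y _ hxy
  obtain ⟨θ, hθ, hφθ⟩ := hφ.exists_mem_Ioo_lt_of_mem_Ico hθ₁ (by rw [hφθ₁]; exact hx.trans_lt hxy)
  set U : Set (ℝ × ℝ) := Ioo 0 (2 * π) ×ˢ univ ∩ energy φ ⁻¹' Ioo x y
  have hU : IsOpen U :=
    (isOpen_Ioo.prod isOpen_univ).inter (isOpen_Ioo.preimage (continuous_energy hφ))
  have hUne : U.Nonempty := by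
    obtain ⟨e, he⟩ := exists_between (max_lt hxy hφθ)
    refine ⟨(θ, √(2 * (e - φ θ))), ⟨hθ, mem_univ _⟩, ?_⟩
    have : energy φ (θ, √(2 * (e - φ θ))) = e := by
      simp only [energy, sq_sqrt (by linarith [le_max_right x (φ θ)] : 0 ≤ 2 * (e - φ θ))]
      ring
    simp only [mem_preimage, mem_Ioo, this]
    exact ⟨(le_max_left _ _).trans_lt he.1, he.2⟩
  have hdisj : Disjoint {p : ℝ × ℝ | p.1 ∈ Ico 0 (2 * π) ∧ p.2 ^ 2 / 2 + φ p.1 < x} U :=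
    disjoint_left.2 fun p hp hpU => hpU.2.1.not_gt hp.2
  calc aVol φ x < aVol φ x + volume U :=
        ENNReal.lt_add_right (aVol_lt_top hc x).ne (hU.measure_pos volume hUne).ne'
    _ = volume ({p : ℝ × ℝ | p.1 ∈ Ico 0 (2 * π) ∧ p.2 ^ 2 / 2 + φ p.1 < x} ∪ U) :=
        (measure_union hdisj hU.measurableSet).symm
    _ ≤ aVol φ y := measure_mono <| union_subset (fun p hp => ⟨hp.1, hp.2.trans hxy⟩)
        fun p hp => ⟨Ioo_subset_Ico_self hp.1.1, hp.2.2⟩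

end PhaseSpace

theorem energy_of_rearrangement_general (m θ₀ : ℝ) (hm : 0 ≤ m)
    (f : ℝ × ℝ → ℝ)
    (aInv : ℝ → ℝ)
    (haInv : ∀ s ≥ (0:ℝ), -m ≤ aInv s ∧
        aVol (fun θ => -(m * Real.cos (θ - θ₀))) (aInv s) = ENNReal.ofReal s) :
    ∫ p in {p : ℝ × ℝ | p.1 ∈ Set.Ico (0:ℝ) (2 * π)},
        (p.2 ^ 2 / 2 + (-(m * Real.cos (p.1 - θ₀)))) *
          pseudoInv f (aVol (fun θ => -(m * Real.cos (θ - θ₀)))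
            (p.2 ^ 2 / 2 + (-(m * Real.cos (p.1 - θ₀)))))
      = ∫ s in Set.Ioi (0:ℝ), pseudoInv f (ENNReal.ofReal s) * aInv s := by
  set φ : ℝ → ℝ := fun θ => -(m * Real.cos (θ - θ₀))
  have hφ : Continuous φ := by fun_prop
  have hφ_ge : ∀ θ, -m ≤ φ θ := fun θ => by
    simpa [φ] using mul_le_of_le_one_right hm (cos_le_one (θ - θ₀))
  have hφ_min : φ (toIcoMod two_pi_pos 0 θ₀) = -m := by
    simp only [φ, toIcoMod_sub_self_eq_mul, neg_mul, cos_neg, cos_int_mul_two_pi, mul_one]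
  have hA := aVol_eq_restrict_phaseStrip hφ.measurable
  have hlevel : ∀ e, volume.restrict phaseStrip {p | energy φ p = e} = 0 := fun e =>
    Measure.absolutelyContinuous_of_le Measure.restrict_le_self (volume_energy_eq hφ.measurable e)
  have hE_ge : ∀ p, -m ≤ energy φ p := fun p => by
    unfold energy; linarith [hφ_ge p.1, sq_nonneg p.2]
  have hmono : StrictMonoOn (fun e => volume.restrict phaseStrip {p | energy φ p < e})
      (Ici (-m)) := by
    simpa only [← hA] using strictMonoOn_aVol hφ hφ_ge (toIcoMod_mem_Ico' _ _) hφ_min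
  have hg : Measurable fun e => e * pseudoInv f (aVol φ e) :=
    measurable_id.mul ((measurable_pseudoInv f).comp (aVol_mono φ).measurable)
  refine (integral_comp_energy_eq_setIntegral_Ioi (measurable_energy hφ.measurable) hlevel hE_ge
    hmono (by simpa only [← hA] using haInv) hg).trans
    (setIntegral_congr_fun measurableSet_Ioi fun s hs => ?_)
  rw [(haInv s (le_of_lt hs)).2, mul_comm]

/-- for φ(θ) = -m cos(θ - θ₀), m ≥ 0, and nonnegative f ∈ L¹,
∬ (v²/2 + φ(θ)) f^{*φ}(θ,v) dθ dv = ∫₀^∞ f^♯(s) a_φ⁻¹(s) ds. -/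
theorem energy_of_rearrangement (m θ₀ : ℝ) (hm : 0 ≤ m)
    (f : ℝ × ℝ → ℝ) (hfm : Measurable f) (hf0 : ∀ p, 0 ≤ f p)
    (hfint : IntegrableOn f {p : ℝ × ℝ | p.1 ∈ Set.Ico (0:ℝ) (2 * π)} volume)
    (aInv : ℝ → ℝ)
    (haInv : ∀ s ≥ (0:ℝ), -m ≤ aInv s ∧
        aVol (fun θ => -(m * Real.cos (θ - θ₀))) (aInv s) = ENNReal.ofReal s) :
    ∫ p in {p : ℝ × ℝ | p.1 ∈ Set.Ico (0:ℝ) (2 * π)},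
        (p.2 ^ 2 / 2 + (-(m * Real.cos (p.1 - θ₀)))) *
          pseudoInv f (aVol (fun θ => -(m * Real.cos (θ - θ₀)))
            (p.2 ^ 2 / 2 + (-(m * Real.cos (p.1 - θ₀)))))
      = ∫ s in Set.Ioi (0:ℝ), pseudoInv f (ENNReal.ofReal s) * aInv s :=
  energy_of_rearrangement_general m θ₀ hm f aInv haInv
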